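/- The M_tb modified profile likelihood L^MP(N) = (N!/(N-x₀)!) · (N - x₀)^(N - x₀ + 1/2) · N^(-(N+1/2)) is strictly increasing in N for integers N > x₀ sufficiently large; equivalently, the ratio L^MP(N+1)/L^MP(N) > 1 for all sufficiently large N. Consequently L^MP has no finite maximizer. -/

import Mathlib

open Real

lemma log_lt_aux {x : ℝ} (hx : 0 < x) :
    Real.log (1 + x) < x * (2 + x) / (2 * (1 + x)) := by
  set c : ℝ := x * (2 + x) / (2 * (1 + x)) with hc
  have h1x : (0:ℝ) < 1 + x := by linarith
  have hcpos : 0 < c := by positivity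
  have hq : 1 + c + c ^ 2 / 2 ≤ Real.exp c := Real.quadratic_le_exp_of_nonneg hcpos.le
  have hkey : c - x + c ^ 2 / 2 = x ^ 4 / (8 * (1 + x) ^ 2) := by
    rw [hc]
    field_simp
    ring
  have hpos4 : 0 < x ^ 4 / (8 * (1 + x) ^ 2) := by positivity
  have hlt : 1 + x < Real.exp c := by linarith
  rwa [Real.log_lt_iff_lt_exp h1x]

lemma h_strictAnti : StrictAntiOn
    (fun t : ℝ => (t + 1 / 2) * (Real.log (t + 1) - Real.log t)) (Set.Ioi 0) := by
  have hderiv : ∀ t : ℝ, 0 < t → HasDerivAt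
      (fun t : ℝ => (t + 1 / 2) * (Real.log (t + 1) - Real.log t))
      ((Real.log (t + 1) - Real.log t) + (t + 1 / 2) * (1 / (t + 1) - 1 / t)) t := by
    intro t ht
    have h1 : HasDerivAt (fun t : ℝ => t + 1 / 2) 1 t := by
      simpa using (hasDerivAt_id t).add_const (1/2 : ℝ)
    have h2 : HasDerivAt (fun t : ℝ => Real.log (t + 1)) (1 / (t + 1)) t := by
      have := ((hasDerivAt_id t).add_const (1 : ℝ)).log (by positivity)
      simpa using this
    have h3 : HasDerivAt Real.log (1 / t) t := by
      simpa [one_div] using Real.hasDerivAt_log ht.ne'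
    have := h1.mul (h2.sub h3)
    exact this.congr_deriv (by simp only [Pi.sub_apply, one_mul])
  apply strictAntiOn_of_deriv_neg (convex_Ioi 0)
  · exact fun t ht => ((hderiv t ht).differentiableAt.continuousAt.continuousWithinAt)
  · intro t ht
    rw [interior_Ioi] at ht
    have ht : (0:ℝ) < t := ht
    rw [(hderiv t ht).deriv]
    have hlog : Real.log (t + 1) - Real.log t = Real.log (1 + 1 / t) := by
      rw [← Real.log_div (by positivity) ht.ne']
      congr 1
      field_simp
    have hb := log_lt_aux (x := 1 / t) (by positivity)
    have heq : (1 / t) * (2 + 1 / t) / (2 * (1 + 1 / t)) + (t + 1 / 2) * (1 / (t + 1) - 1 / t) = 0 := by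
      field_simp
      ring
    rw [hlog]
    linarith

lemma rpow_ratio_lt {a b : ℝ} (ha : 0 < a) (hab : a < b) :
    ((b + 1) / b) ^ (b + 1 / 2) < ((a + 1) / a) ^ (a + 1 / 2) := by
  have hb : 0 < b := ha.trans hab
  have e1 : ((a + 1) / a) ^ (a + 1 / 2) = Real.exp ((a + 1 / 2) * (Real.log (a + 1) - Real.log a)) := by
    rw [Real.rpow_def_of_pos (by positivity), Real.log_div (by positivity) ha.ne', mul_comm]
  have e2 : ((b + 1) / b) ^ (b + 1 / 2) = Real.exp ((b + 1 / 2) * (Real.log (b + 1) - Real.log b)) := by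
    rw [Real.rpow_def_of_pos (by positivity), Real.log_div (by positivity) hb.ne', mul_comm]
  rw [e1, e2, Real.exp_lt_exp]
  exact h_strictAnti (Set.mem_Ioi.mpr ha) (Set.mem_Ioi.mpr hb) hab

theorem stmt_17 (x₀ : ℕ) (hx₀ : 0 < x₀) (LMP : ℕ → ℝ)
    (hLMP : ∀ N : ℕ, x₀ < N →
      LMP N = ((N.factorial : ℝ) / (N - x₀).factorial)
        * ((N : ℝ) - x₀) ^ ((N : ℝ) - x₀ + 1 / 2)
        * (N : ℝ) ^ (-((N : ℝ) + 1 / 2))) :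
    (∃ N₁ : ℕ, x₀ < N₁ ∧ ∀ N : ℕ, N₁ ≤ N → LMP (N + 1) / LMP N > 1) ∧
    ¬ ∃ M : ℕ, x₀ < M ∧ ∀ N : ℕ, x₀ < N → LMP N ≤ LMP M := by
  have pos : ∀ N : ℕ, x₀ < N → 0 < LMP N := by
    intro N hN
    rw [hLMP N hN]
    have hxN : (x₀ : ℝ) < N := by exact_mod_cast hN
    have h1 : (0:ℝ) < (N : ℝ) - x₀ := by linarith
    have h2 : (0:ℝ) < (N : ℝ) := by
      have : (0:ℝ) ≤ (x₀:ℝ) := by positivity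
      linarith
    exact mul_pos (mul_pos (div_pos (by exact_mod_cast N.factorial_pos)
      (by exact_mod_cast (N - x₀).factorial_pos)) (Real.rpow_pos_of_pos h1 _))
      (Real.rpow_pos_of_pos h2 _)
  have key : ∀ N : ℕ, x₀ < N → LMP N < LMP (N + 1) := by
    intro N hN
    have hxN : x₀ ≤ N := hN.le
    have hLN := hLMP N hN
    have hLN1 := hLMP (N + 1) (by omega)
    have hcast : (x₀ : ℝ) < N := by exact_mod_cast hN
    have hx0pos : (0:ℝ) < x₀ := by exact_mod_cast hx₀
    set a : ℝ := (N : ℝ) - x₀ with ha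
    set b : ℝ := (N : ℝ) with hb
    set C : ℝ := (N.factorial : ℝ) / ((N - x₀).factorial : ℝ) with hC
    have hapos : 0 < a := by rw [ha]; linarith
    have hbpos : 0 < b := by rw [hb]; linarith
    have hab : a < b := by rw [ha, hb]; linarith
    have hCpos : 0 < C := by
      rw [hC]
      exact div_pos (by exact_mod_cast N.factorial_pos) (by exact_mod_cast (N - x₀).factorial_pos)
    have hfac : (((N + 1).factorial : ℕ) : ℝ) / (((N + 1 - x₀).factorial : ℕ) : ℝ)
        = (b + 1) / (a + 1) * C := by
      have h1 : N + 1 - x₀ = (N - x₀) + 1 := by omega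
      have h2 : ((N - x₀ : ℕ) : ℝ) = a := by rw [ha]; push_cast [hxN]; ring
      rw [h1, Nat.factorial_succ, Nat.factorial_succ]
      push_cast [h2]
      rw [hC, hb]
      have hfa : ((N - x₀).factorial : ℝ) ≠ 0 := by
        exact_mod_cast (N - x₀).factorial_pos.ne'
      field_simp
    have hE : LMP (N + 1) = C * (a + 1) ^ (a + 1/2) * (b + 1) ^ (-(b + 1/2)) := by
      rw [hLN1, hfac,
        show ((N + 1 : ℕ) : ℝ) - (x₀ : ℝ) = a + 1 from by push_cast [ha]; ring,
        show ((N + 1 : ℕ) : ℝ) = b + 1 from by push_cast [hb]; ring,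
        show a + 1 + 1/2 = (a + 1/2) + 1 from by ring,
        Real.rpow_add_one (by positivity : a + 1 ≠ 0),
        show -(b + 1 + 1/2) = -(b + 1/2) + (-1) from by ring,
        Real.rpow_add (by linarith : (0:ℝ) < b + 1), Real.rpow_neg_one]
      field_simp
    rw [hLN, hE]
    have hg := rpow_ratio_lt hapos hab
    rw [Real.div_rpow (by linarith) hapos.le, Real.div_rpow (by linarith) hbpos.le] at hg
    rw [div_lt_div_iff₀ (Real.rpow_pos_of_pos hbpos _) (Real.rpow_pos_of_pos hapos _)] at hg
    have p1 : 0 < b ^ (b + 1/2) := Real.rpow_pos_of_pos hbpos _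
    have p2 : 0 < (b + 1) ^ (b + 1/2) := Real.rpow_pos_of_pos (by linarith) _
    rw [Real.rpow_neg hbpos.le, Real.rpow_neg (by linarith : (0:ℝ) ≤ b + 1),
      ← div_eq_mul_inv, ← div_eq_mul_inv, div_lt_div_iff₀ p1 p2]
    have := mul_lt_mul_of_pos_left hg hCpos
    nlinarith [this]
  refine ⟨⟨x₀ + 1, by omega, fun N hN => ?_⟩, ?_⟩
  · have hN' : x₀ < N := by omega
    rw [gt_iff_lt, lt_div_iff₀ (pos N hN')]
    simpa using key N hN'
  · rintro ⟨M, hM, hmax⟩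
    exact absurd (hmax (M + 1) (by omega)) (not_le.mpr (key M hM))
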